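/- For a statistical manifold (M, g, ∇), the (0,4)-curvature tensor R(X,Y,Z,W) = g(R(X,Y)Z, W) satisfies R(X,Y,Z,W) + R(X,Y,W,Z) = (∇̂_Y C)(X,Z,W) − (∇̂_X C)(Y,Z,W). -/
import Mathlib


open scoped BigOperators

namespace StatMfd

/-- Vector fields on an "abstract manifold": derivations of the algebra `A`
of smooth functions. -/
abbrev VF (A : Type*) [CommRing A] [Algebra ℝ A] := Derivation ℝ A A

variable {A : Type*} [CommRing A] [Algebra ℝ A]

/-- An affine connection on vector fields. -/
structure Conn (A : Type*) [CommRing A] [Algebra ℝ A] where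
  D : VF A → VF A → VF A
  add_left : ∀ X Y Z, D (X + Y) Z = D X Z + D Y Z
  smul_left : ∀ (f : A) (X Y), D (f • X) Y = f • D X Y
  add_right : ∀ X Y Z, D X (Y + Z) = D X Y + D X Z
  leibniz : ∀ (f : A) (X Y), D X (f • Y) = f • D X Y + (X f) • Y

/-- A pseudo-Riemannian metric: a symmetric nondegenerate `A`-bilinear form. -/
structure Metric (A : Type*) [CommRing A] [Algebra ℝ A] where
  g : VF A → VF A → A
  add_left : ∀ X Y Z, g (X + Y) Z = g X Z + g Y Z
  smul_left : ∀ (f : A) (X Y), g (f • X) Y = f * g X Y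
  symm : ∀ X Y, g X Y = g Y X
  nondeg : ∀ X, (∀ Y, g X Y = 0) → X = 0

/-- The connection `∇` is torsion free. -/
def TorsionFree (C : Conn A) : Prop := ∀ X Y, C.D X Y - C.D Y X = ⁅X, Y⁆

/-- The cubic form `C(X,Y,Z) = (∇_X g)(Y,Z)`. -/
def cubic (gm : Metric A) (C : Conn A) (X Y Z : VF A) : A :=
  X (gm.g Y Z) - gm.g (C.D X Y) Z - gm.g Y (C.D X Z)

/-- Total symmetry of a `(0,3)`-tensor (valued in `A` or in vector fields). -/
def TotSym3 {B : Type*} (T : VF A → VF A → VF A → B) : Prop :=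
  (∀ X Y Z, T X Y Z = T Y X Z) ∧ (∀ X Y Z, T X Y Z = T X Z Y)

/-- Total symmetry of a `(0,4)`-tensor. -/
def TotSym4 (T : VF A → VF A → VF A → VF A → A) : Prop :=
  (∀ X Y Z W, T X Y Z W = T Y X Z W) ∧ (∀ X Y Z W, T X Y Z W = T X Z Y W) ∧
    (∀ X Y Z W, T X Y Z W = T X Y W Z)

/-- `(g, ∇)` is a statistical structure. -/
def IsStatistical (gm : Metric A) (C : Conn A) : Prop :=
  TorsionFree C ∧ TotSym3 (cubic gm C)

/-- `∇*` is the dual connection of `∇` with respect to `g`. -/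
def IsDual (gm : Metric A) (C Cs : Conn A) : Prop :=
  ∀ X Y Z, X (gm.g Y Z) = gm.g (C.D X Y) Z + gm.g Y (Cs.D X Z)

/-- `h` is the Levi-Civita connection of `g`. -/
def IsLeviCivita (gm : Metric A) (h : Conn A) : Prop :=
  TorsionFree h ∧ ∀ X Y Z, X (gm.g Y Z) = gm.g (h.D X Y) Z + gm.g Y (h.D X Z)

/-- The difference tensor `K(X,Y) = ∇_X Y − ∇̂_X Y`. -/
def Kdiff (C h : Conn A) (X Y : VF A) : VF A := C.D X Y - h.D X Y

/-- The curvature tensor of a connection. -/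
def curv (C : Conn A) (X Y Z : VF A) : VF A :=
  C.D X (C.D Y Z) - C.D Y (C.D X Z) - C.D ⁅X, Y⁆ Z

/-- `(∇_X K)(Y,Z)` for a `(1,2)`-tensor `K`. -/
def covK (C : Conn A) (K : VF A → VF A → VF A) (X Y Z : VF A) : VF A :=
  C.D X (K Y Z) - K (C.D X Y) Z - K Y (C.D X Z)

/-- `(∇_X T)(Y,Z,W)` for a `(0,3)`-tensor `T`. -/
def covC (C : Conn A) (T : VF A → VF A → VF A → A) (X Y Z W : VF A) : A :=
  X (T Y Z W) - T (C.D X Y) Z W - T Y (C.D X Z) W - T Y Z (C.D X W)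

/-- `(∇_X T)(Y,Z)` for a `(0,2)`-tensor `T`. -/
def cov2 (C : Conn A) (T : VF A → VF A → A) (X Y Z : VF A) : A :=
  X (T Y Z) - T (C.D X Y) Z - T Y (C.D X Z)

/-- `(∇_X R)(Y,Z)W` for the curvature tensor of a connection. -/
def covR (C : Conn A) (X Y Z W : VF A) : VF A :=
  C.D X (curv C Y Z W) - curv C (C.D X Y) Z W - curv C Y (C.D X Z) W
    - curv C Y Z (C.D X W)

/-- A global frame of vector fields together with its dual coframe. -/
structure Frame (A : Type*) [CommRing A] [Algebra ℝ A] (n : ℕ) where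
  e : Fin n → VF A
  ε : Fin n → VF A → A
  ε_add : ∀ i X Y, ε i (X + Y) = ε i X + ε i Y
  ε_smul : ∀ i (f : A) X, ε i (f • X) = f * ε i X
  expand : ∀ X, X = ∑ i, ε i X • e i

/-- The Ricci curvature `Ric(Y,Z) = tr{X ↦ R(X,Y)Z}` computed in a frame. -/
def ricci {n : ℕ} (F : Frame A n) (C : Conn A) (Y Z : VF A) : A :=
  ∑ i, F.ε i (curv C (F.e i) Y Z)

/-- `τ_g(X) = tr K_X` computed in a frame. -/
def tau {n : ℕ} (F : Frame A n) (K : VF A → VF A → VF A) (X : VF A) : A :=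
  ∑ i, F.ε i (K X (F.e i))

/-- `(div^∇̂ K)(Y,Z)`, the trace of `V ↦ (∇̂_V K)(Y,Z)`, computed in a frame. -/
def divK {n : ℕ} (F : Frame A n) (h : Conn A) (K : VF A → VF A → VF A)
    (Y Z : VF A) : A :=
  ∑ i, F.ε i (covK h K (F.e i) Y Z)

/-- `(M,g,∇)` has constant curvature `k`. -/
def ConstCurv (gm : Metric A) (C : Conn A) (k : ℝ) : Prop :=
  ∀ X Y Z, curv C X Y Z = k • (gm.g Y Z • X - gm.g X Z • Y)

/-- Projective flatness of a connection, via Eisenhart's characterization: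
for `n = 2` total symmetry of `∇ Ric`, for `n ≥ 3` vanishing of the
projective curvature tensor. -/
def ProjFlat {n : ℕ} (F : Frame A n) (C : Conn A) : Prop :=
  (n = 2 ∧ TotSym3 (cov2 C (ricci F C))) ∨
    (3 ≤ n ∧ ∀ X Y Z, curv C X Y Z =
      ((n : ℝ) - 1)⁻¹ • (ricci F C Y Z • X - ricci F C X Z • Y))



section Helpers

lemma g_sub_left (gm : Metric A) (X Y Z : VF A) :
    gm.g (X - Y) Z = gm.g X Z - gm.g Y Z := by
  have := gm.add_left (X - Y) Y Z; rw [sub_add_cancel] at this; linear_combination -this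

lemma g_add_right (gm : Metric A) (X Y Z : VF A) :
    gm.g X (Y + Z) = gm.g X Y + gm.g X Z := by
  rw [gm.symm, gm.add_left, gm.symm Y X, gm.symm Z X]

lemma g_sub_right (gm : Metric A) (X Y Z : VF A) :
    gm.g X (Y - Z) = gm.g X Y - gm.g X Z := by
  rw [gm.symm, g_sub_left, gm.symm Y X, gm.symm Z X]

lemma D_sub_right (Cn : Conn A) (X Y Z : VF A) :
    Cn.D X (Y - Z) = Cn.D X Y - Cn.D X Z := by
  have := Cn.add_right X (Y - Z) Z; rw [sub_add_cancel] at this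
  rw [this]; abel

lemma D_sub_left (Cn : Conn A) (X Y Z : VF A) :
    Cn.D (X - Y) Z = Cn.D X Z - Cn.D Y Z := by
  have := Cn.add_left (X - Y) Y Z; rw [sub_add_cancel] at this
  rw [this]; abel

lemma curv_decomp (C h : Conn A) (htfh : TorsionFree h) (X Y Z : VF A) :
    curv C X Y Z = curv h X Y Z + covK h (Kdiff C h) X Y Z - covK h (Kdiff C h) Y X Z
      + Kdiff C h X (Kdiff C h Y Z) - Kdiff C h Y (Kdiff C h X Z) := by
  have hb : (⁅X, Y⁆ : VF A) = h.D X Y - h.D Y X := (htfh X Y).symm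
  unfold curv covK Kdiff
  rw [hb]
  simp only [D_sub_right, D_sub_left]
  abel

section Main

variable (gm : Metric A) (C h : Conn A)
  (hstat : IsStatistical gm C) (hLC : IsLeviCivita gm h)

include hLC in
lemma cubic_eq (X Y Z : VF A) :
    cubic gm C X Y Z = -(gm.g (Kdiff C h X Y) Z) - gm.g Y (Kdiff C h X Z) := by
  unfold cubic Kdiff
  rw [hLC.2 X Y Z, g_sub_left, g_sub_right]
  ring

include hstat hLC in
lemma Ksymm (X Y : VF A) : Kdiff C h X Y = Kdiff C h Y X := by
  unfold Kdiff
  rw [sub_eq_sub_iff_sub_eq_sub, hstat.1 X Y, hLC.1 X Y]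

include hstat hLC in
lemma T13 (X Y Z : VF A) :
    gm.g (Kdiff C h X Z) Y = gm.g (Kdiff C h Y Z) X := by
  have e := hstat.2.1 X Y Z
  rw [cubic_eq gm C h hLC X Y Z, cubic_eq gm C h hLC Y X Z,
    Ksymm gm C h hstat hLC Y X] at e
  linear_combination -e - gm.symm Y (Kdiff C h X Z) + gm.symm X (Kdiff C h Y Z)

include hstat hLC in
lemma T23 (X Y Z : VF A) :
    gm.g (Kdiff C h X Y) Z = gm.g Y (Kdiff C h X Z) := by
  rw [T13 gm C h hstat hLC X Z Y, Ksymm gm C h hstat hLC Z Y,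
    gm.symm Y (Kdiff C h X Z), T13 gm C h hstat hLC X Y Z,
    Ksymm gm C h hstat hLC Y Z]

include hLC in
lemma LCskew (X Y Z W : VF A) :
    gm.g (curv h X Y Z) W + gm.g (curv h X Y W) Z = 0 := by
  have hXY : X (Y (gm.g Z W)) = gm.g (h.D X (h.D Y Z)) W + gm.g (h.D Y Z) (h.D X W)
      + gm.g (h.D X Z) (h.D Y W) + gm.g Z (h.D X (h.D Y W)) := by
    rw [hLC.2 Y Z W, map_add, hLC.2 X (h.D Y Z) W, hLC.2 X Z (h.D Y W)]; ring
  have hYX : Y (X (gm.g Z W)) = gm.g (h.D Y (h.D X Z)) W + gm.g (h.D X Z) (h.D Y W)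
      + gm.g (h.D Y Z) (h.D X W) + gm.g Z (h.D Y (h.D X W)) := by
    rw [hLC.2 X Z W, map_add, hLC.2 Y (h.D X Z) W, hLC.2 Y Z (h.D X W)]; ring
  have hbr : (⁅X, Y⁆ : VF A) (gm.g Z W) = X (Y (gm.g Z W)) - Y (X (gm.g Z W)) := by
    rw [Derivation.commutator_apply]
  have hc := hLC.2 ⁅X, Y⁆ Z W
  unfold curv
  simp only [g_sub_left]
  linear_combination -hXY + hYX + hc - hbr + gm.symm (h.D X (h.D Y W)) Z
    - gm.symm (h.D Y (h.D X W)) Z - gm.symm (h.D ⁅X, Y⁆ W) Z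

include hLC in
lemma covC_eq (X Y Z W : VF A) :
    covC h (cubic gm C) X Y Z W =
      -(gm.g (covK h (Kdiff C h) X Y Z) W) - gm.g Z (covK h (Kdiff C h) X Y W) := by
  unfold covC covK
  rw [cubic_eq gm C h hLC Y Z W, cubic_eq gm C h hLC (h.D X Y) Z W,
      cubic_eq gm C h hLC Y (h.D X Z) W, cubic_eq gm C h hLC Y Z (h.D X W)]
  rw [Derivation.map_sub, Derivation.map_neg, hLC.2 X (Kdiff C h Y Z) W,
      hLC.2 X Z (Kdiff C h Y W)]
  rw [g_sub_left, g_sub_left, g_sub_right, g_sub_right]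
  ring

end Main

end Helpers

/-- `R(X,Y,Z,W) + R(X,Y,W,Z) = (∇̂_Y C)(X,Z,W) − (∇̂_X C)(Y,Z,W)`. -/
theorem stmt9 (gm : Metric A) (C h : Conn A)
    (hstat : IsStatistical gm C) (hLC : IsLeviCivita gm h) :
    ∀ X Y Z W, gm.g (curv C X Y Z) W + gm.g (curv C X Y W) Z =
      covC h (cubic gm C) Y X Z W - covC h (cubic gm C) X Y Z W := by
  intro X Y Z W
  rw [covC_eq gm C h hLC Y X Z W, covC_eq gm C h hLC X Y Z W,
      curv_decomp C h hLC.1 X Y Z, curv_decomp C h hLC.1 X Y W]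
  simp only [gm.add_left, g_sub_left]
  have hs := LCskew gm h hLC X Y Z W
  have t1 := T23 gm C h hstat hLC X (Kdiff C h Y Z) W
  have t2 := T23 gm C h hstat hLC Y (Kdiff C h X Z) W
  have t3 := T23 gm C h hstat hLC X (Kdiff C h Y W) Z
  have t4 := T23 gm C h hstat hLC Y (Kdiff C h X W) Z
  linear_combination hs + t1 - t2 + t3 - t4
    + gm.symm (Kdiff C h Y Z) (Kdiff C h X W)
    - gm.symm (Kdiff C h X Z) (Kdiff C h Y W)
    + gm.symm (covK h (Kdiff C h) X Y W) Z
    - gm.symm (covK h (Kdiff C h) Y X W) Z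


end StatMfd
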